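/- Fix α > 0, a Borel set A ⊆ ℝ² and C₀ > 0, and for each ε ∈ (0,1) let u_ε : ℤ² → ℝ satisfy F_ε^{p-edge}(u_ε,A) ≤ C₀·|log ε|. Set w_ε(i) := exp(2πι u_ε(i)) ∈ ℂ. For j ∈ {0,1,2,3} let s₀ = (0,0), s₁ = (1,0), s₂ = (0,1), s₃ = (1,1), and define the weak-membrane energies WM_j^{R,α}(w_ε,A) := Σ_{i ∈ 2ℤ²+s_j with [εi, ε(i+2e₁)] ⊆ A} min{ ½|w_ε(i+2e₁) − w_ε(i)|² , 2Rε } + Σ_{i ∈ 2ℤ²+s_j with [εi, ε(i+2e₂)] ⊆ A} min{ ½|w_ε(i+2e₂) − w_ε(i)|² , 2αε }. Then there exists C₁ > 0, depending only on α and C₀, such that for every R > 0 there exists ε_R > 0 with: for every ε ∈ (0, ε_R), F_ε^{p-edge}(u_ε,A) + C₁·√ε·|log ε| ≥ ¼·Σ_{j=0}^{3} WM_j^{R,α}(w_ε,A). -/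

import Mathlib

open scoped ENNReal

/-- The plane `ℝ²` with the Euclidean norm. -/
abbrev Plane : Type := EuclideanSpace ℝ (Fin 2)

/-- The lattice point `i ∈ ℤ²` viewed as a point of the plane. -/
noncomputable def toPlane (i : ℤ × ℤ) : Plane :=
  (WithLp.equiv 2 (Fin 2 → ℝ)).symm ![(i.1 : ℝ), (i.2 : ℝ)]

/-- `Z_ε^{e}(A)`: the lattice points `i` such that the closed segment `[εi, ε(i+e)]`
is contained in `A`. -/
def latticeSeg (ε : ℝ) (e : ℤ × ℤ) (A : Set Plane) : Set (ℤ × ℤ) :=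
  {i | segment ℝ (ε • toPlane i) (ε • toPlane (i + e)) ⊆ A}

/-- The distance of a real number to the set of integers. -/
noncomputable def distZ (t : ℝ) : ℝ := ⨅ n : ℤ, |t - n|

/-- The distance of a real number to the set of half-integers `(1/2)ℤ`. -/
noncomputable def distHalfZ (t : ℝ) : ℝ := ⨅ n : ℤ, |t - n / 2|

/-- The interaction potential `f₀(t) = 2π²t²`. -/
noncomputable def f0 (t : ℝ) : ℝ := 2 * Real.pi ^ 2 * t ^ 2

/-- The interaction potential `f₁(t) = 2π²·dist(t,ℤ)²`. -/
noncomputable def f1 (t : ℝ) : ℝ := 2 * Real.pi ^ 2 * distZ t ^ 2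

/-- The interaction potential `f_{1/2}(t) = 2π²·dist(t,(1/2)ℤ)²`. -/
noncomputable def fHalf (t : ℝ) : ℝ := 2 * Real.pi ^ 2 * distHalfZ t ^ 2

/-- The edge-dislocation energy `F_ε^{edge}(u,A)`, a sum in `[0,∞]`. -/
noncomputable def Fedge (ε : ℝ) (u : ℤ × ℤ → ℝ) (A : Set Plane) : ℝ≥0∞ :=
  (∑' i : latticeSeg ε (1, 0) A, ENNReal.ofReal (f0 (u ((i : ℤ × ℤ) + (1, 0)) - u (i : ℤ × ℤ))))
    + ∑' i : latticeSeg ε (0, 1) A, ENNReal.ofReal (f1 (u ((i : ℤ × ℤ) + (0, 1)) - u (i : ℤ × ℤ)))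

/-- The screw-dislocation energy `F_ε^{screw}(u,A)`, a sum in `[0,∞]`. -/
noncomputable def Fscrew (ε : ℝ) (u : ℤ × ℤ → ℝ) (A : Set Plane) : ℝ≥0∞ :=
  (∑' i : latticeSeg ε (1, 0) A, ENNReal.ofReal (f1 (u ((i : ℤ × ℤ) + (1, 0)) - u (i : ℤ × ℤ))))
    + ∑' i : latticeSeg ε (0, 1) A, ENNReal.ofReal (f1 (u ((i : ℤ × ℤ) + (0, 1)) - u (i : ℤ × ℤ)))

/-- The partial-edge-dislocation energy `F_ε^{p-edge}(u,A)` (with parameter `α`),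
a sum in `[0,∞]`. -/
noncomputable def Fpedge (α ε : ℝ) (u : ℤ × ℤ → ℝ) (A : Set Plane) : ℝ≥0∞ :=
  (∑' i : latticeSeg ε (1, 0) A, ENNReal.ofReal (f0 (u ((i : ℤ × ℤ) + (1, 0)) - u (i : ℤ × ℤ))))
    + (∑' i : latticeSeg ε (0, 1) A,
        ENNReal.ofReal (fHalf (u ((i : ℤ × ℤ) + (0, 1)) - u (i : ℤ × ℤ))))
    + ENNReal.ofReal (α / Real.pi ^ 2 * ε) *
        ∑' i : latticeSeg ε (0, 2) A, ENNReal.ofReal (f1 (u ((i : ℤ × ℤ) + (0, 2)) - u (i : ℤ × ℤ)))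

/-- The shift vectors `s₀ = (0,0)`, `s₁ = (1,0)`, `s₂ = (0,1)`, `s₃ = (1,1)`. -/
def sVec : Fin 4 → ℤ × ℤ := ![(0, 0), (1, 0), (0, 1), (1, 1)]

/-- Points of the shifted double lattice `2ℤ² + s_j` such that `[εi, ε(i+e)] ⊆ A`. -/
def subLat (ε : ℝ) (j : Fin 4) (e : ℤ × ℤ) (A : Set Plane) : Set (ℤ × ℤ) :=
  {i | (∃ k : ℤ × ℤ, i = 2 • k + sVec j) ∧ segment ℝ (ε • toPlane i) (ε • toPlane (i + e)) ⊆ A}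

/-- The weak-membrane energy `WM_j^{R,α}(w,A)` on the shifted double lattice `2ℤ² + s_j`. -/
noncomputable def WMen (α R ε : ℝ) (j : Fin 4) (w : ℤ × ℤ → ℂ) (A : Set Plane) : ℝ≥0∞ :=
  (∑' i : subLat ε j (2, 0) A,
      ENNReal.ofReal
        (min (1 / 2 * ‖w ((i : ℤ × ℤ) + (2, 0)) - w (i : ℤ × ℤ)‖ ^ 2) (2 * R * ε)))
    + ∑' i : subLat ε j (0, 2) A,
      ENNReal.ofReal
        (min (1 / 2 * ‖w ((i : ℤ × ℤ) + (0, 2)) - w (i : ℤ × ℤ)‖ ^ 2) (2 * α * ε))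

/-! With `w = exp(2πi u)` one has `½|w(j) - w(i)|² = 1 - cos 2π(u(j) - u(i))`, which is at
most `2π²(u(j) - u(i) - n)²` for every integer `n`. A bond `[i, i + 2e]` of a shifted double
lattice is the union of two unit bonds; the four shifted double lattices use each bond of length
two at most once, so each unit bond is counted at most twice, which is where the factor `¼` comes
from. Horizontally the two `f₀` terms bound the weak-membrane term; vertically the two `f_{1/2}`
terms and the `f₁` term do so up to a factor `1 + 8αε/π²`, and the surplus
`(8αε/π²)·F ≤ (8αC₀/π²)·ε|log ε|` is below `C₁√ε|log ε|`. -/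

open Real

lemma toPlane_add (i j : ℤ × ℤ) : toPlane (i + j) = toPlane i + toPlane j := by
  ext x
  fin_cases x <;> simp [toPlane]

lemma smul_toPlane_add_mem_segment (ε : ℝ) (i e : ℤ × ℤ) :
    ε • toPlane (i + e) ∈ segment ℝ (ε • toPlane i) (ε • toPlane (i + e + e)) :=
  ⟨1 / 2, 1 / 2, by norm_num, by norm_num, by norm_num, by simp only [toPlane_add]; module⟩

lemma mem_latticeSeg_of_mem_latticeSeg_add_self {ε : ℝ} {A : Set Plane} {e i : ℤ × ℤ}
    (h : i ∈ latticeSeg ε (e + e) A) : i ∈ latticeSeg ε e A ∧ i + e ∈ latticeSeg ε e A := by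
  rw [latticeSeg, Set.mem_ofPred_eq, ← add_assoc] at h
  have hmid := smul_toPlane_add_mem_segment ε i e
  exact ⟨((convex_segment _ _).segment_subset (left_mem_segment ℝ _ _) hmid).trans h,
    ((convex_segment _ _).segment_subset hmid (right_mem_segment ℝ _ _)).trans h⟩

lemma tsum_latticeSeg_add_self_le {ε : ℝ} {A : Set Plane} {e d : ℤ × ℤ} (hd : e + e = d) {c : ℝ}
    (hc : 0 ≤ c) (G h k : ℤ × ℤ → ℝ)
    (hG : ∀ i ∈ latticeSeg ε d A, G i ≤ 2 * h i + 2 * h (i + e) + c * k i) :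
    ∑' i : latticeSeg ε d A, ENNReal.ofReal (G i)
      ≤ 4 * ∑' i : latticeSeg ε e A, ENNReal.ofReal (h i)
        + ENNReal.ofReal c * ∑' i : latticeSeg ε d A, ENNReal.ofReal (k i) := by
  subst hd
  set H := (latticeSeg ε e A).indicator fun i => ENNReal.ofReal (h i)
  set K := (latticeSeg ε (e + e) A).indicator fun i => ENNReal.ofReal (k i)
  have hpt : ∀ i, (latticeSeg ε (e + e) A).indicator (fun i => ENNReal.ofReal (G i)) i
      ≤ 2 * H i + 2 * H (i + e) + ENNReal.ofReal c * K i := by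
    intro i
    by_cases hi : i ∈ latticeSeg ε (e + e) A
    · obtain ⟨h₁, h₂⟩ := mem_latticeSeg_of_mem_latticeSeg_add_self hi
      simp only [H, K, Set.indicator_of_mem hi, Set.indicator_of_mem h₁, Set.indicator_of_mem h₂]
      calc ENNReal.ofReal (G i) ≤ ENNReal.ofReal (2 * h i + 2 * h (i + e) + c * k i) :=
            ENNReal.ofReal_le_ofReal (hG i hi)
        _ ≤ _ := by
          refine ENNReal.ofReal_add_le.trans (add_le_add (ENNReal.ofReal_add_le.trans ?_) ?_)
          · rw [ENNReal.ofReal_mul zero_le_two, ENNReal.ofReal_mul zero_le_two,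
              ENNReal.ofReal_ofNat]
          · rw [ENNReal.ofReal_mul hc]
    · simp [hi]
  have hshift : ∑' i, H (i + e) = ∑' i, H i := (Equiv.addRight e).tsum_eq H
  rw [tsum_subtype _ fun i => ENNReal.ofReal (G i), tsum_subtype _ fun i => ENNReal.ofReal (h i),
    tsum_subtype _ fun i => ENNReal.ofReal (k i)]
  calc _ ≤ ∑' i, (2 * H i + 2 * H (i + e) + ENNReal.ofReal c * K i) := ENNReal.tsum_le_tsum hpt
    _ = _ := by
      rw [ENNReal.tsum_add, ENNReal.tsum_add, ENNReal.tsum_mul_left, ENNReal.tsum_mul_left,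
        ENNReal.tsum_mul_left, hshift]
      ring

lemma eq_of_two_nsmul_add_sVec_eq {k k' : ℤ × ℤ} {j j' : Fin 4}
    (h : 2 • k + sVec j = 2 • k' + sVec j') : j = j' := by
  have h₁ := congrArg Prod.fst h
  have h₂ := congrArg Prod.snd h
  simp only [Prod.fst_add, Prod.snd_add, nsmul_eq_mul] at h₁ h₂
  fin_cases j <;> fin_cases j' <;> simp [sVec] at h₁ h₂ ⊢ <;> omega

lemma sum_tsum_subLat_le (ε : ℝ) (e : ℤ × ℤ) (A : Set Plane) (g : ℤ × ℤ → ℝ≥0∞) :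
    ∑ j, ∑' i : subLat ε j e A, g i ≤ ∑' i : latticeSeg ε e A, g i := by
  have hdisj : Set.univ.PairwiseDisjoint fun j => subLat ε j e A := by
    intro j _ j' _ hne
    refine Set.disjoint_left.mpr fun i hi hi' => hne ?_
    obtain ⟨⟨k, rfl⟩, -⟩ := hi
    obtain ⟨⟨k', hk'⟩, -⟩ := hi'
    exact eq_of_two_nsmul_add_sVec_eq hk'
  rw [← tsum_fintype (L := .unconditional _), ← ENNReal.tsum_biUnion hdisj]
  exact ENNReal.tsum_mono_subtype g (Set.iUnion_subset fun j _ hi => hi.2)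

noncomputable def phase (u : ℤ × ℤ → ℝ) (i : ℤ × ℤ) : ℂ := Complex.exp (2 * π * Complex.I * u i)

lemma half_norm_phase_sub_phase_sq (u : ℤ × ℤ → ℝ) (i j : ℤ × ℤ) :
    1 / 2 * ‖phase u j - phase u i‖ ^ 2 = 1 - cos (2 * π * (u j - u i)) := by
  have hfac : phase u j - phase u i
      = Complex.exp ((2 * π * u i : ℝ) * Complex.I)
        * (Complex.exp (Complex.I * (2 * π * (u j - u i) : ℝ)) - 1) := by
    rw [phase, phase, mul_sub, ← Complex.exp_add, mul_one]
    congr 2 <;> push_cast <;> ring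
  have hcos := cos_two_mul' (π * (u j - u i))
  rw [hfac, norm_mul, Complex.norm_exp_ofReal_mul_I, one_mul,
    Complex.norm_exp_I_mul_ofReal_sub_one, Real.norm_eq_abs, sq_abs,
    show 2 * π * (u j - u i) / 2 = π * (u j - u i) by ring,
    show 2 * π * (u j - u i) = 2 * (π * (u j - u i)) by ring, hcos]
  nlinarith [sin_sq_add_cos_sq (π * (u j - u i))]

lemma one_sub_cos_two_pi_mul_le (x : ℝ) (n : ℤ) :
    1 - cos (2 * π * x) ≤ 2 * π ^ 2 * (x - n) ^ 2 := by
  have h := one_sub_sq_div_two_le_cos (x := 2 * π * x - n * (2 * π))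
  rw [cos_sub_int_mul_two_pi] at h
  nlinarith

lemma one_sub_cos_le_f0 (a b : ℝ) : 1 - cos (2 * π * (a + b)) ≤ 2 * f0 a + 2 * f0 b := by
  have h := one_sub_cos_two_pi_mul_le (a + b) 0
  rw [Int.cast_zero, sub_zero] at h
  unfold f0
  nlinarith [sq_nonneg (a - b), sq_nonneg π]

lemma distHalfZ_eq (t : ℝ) : distHalfZ t = |t - round (2 * t) / 2| := by
  have hhalf : ∀ n : ℤ, |t - n / 2| = |2 * t - n| / 2 := fun n => by
    rw [← abs_two, ← abs_div, abs_two]; ring_nf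
  refine le_antisymm (ciInf_le ⟨0, ?_⟩ _) (le_ciInf fun n => ?_)
  · rintro _ ⟨n, rfl⟩
    exact abs_nonneg _
  · rw [hhalf, hhalf]
    linarith [round_le (2 * t) n]

lemma abs_sub_round_two_mul_div_two_le (t : ℝ) : |t - round (2 * t) / 2| ≤ 1 / 4 := by
  have h := abs_sub_round (2 * t)
  rw [show t - round (2 * t) / 2 = (2 * t - round (2 * t)) / 2 by ring, abs_div, abs_two]
  linarith

lemma one_half_sub_le_distZ (x : ℝ) (n : ℤ) : 1 / 2 - |x - (n + 1 / 2)| ≤ distZ x := by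
  refine le_ciInf fun m => ?_
  have hm : 1 / 2 ≤ |(n : ℝ) + 1 / 2 - m| := by
    rcases le_or_gt m n with h | h
    · have : (m : ℝ) ≤ n := by exact_mod_cast h
      rw [abs_of_nonneg (by linarith)]
      linarith
    · have : (n : ℝ) + 1 ≤ m := by exact_mod_cast h
      rw [abs_of_neg (by linarith)]
      linarith
  linarith [abs_sub_le ((n : ℝ) + 1 / 2) x m, abs_sub_comm ((n : ℝ) + 1 / 2) x]

/-- Near half-integers `p/2`, `q/2` of `a`, `b` at total distance `t`: if `p + q` is even, `a + b`
is within `t` of `ℤ`; if it is odd, `a + b` stays at distance `≥ 1/2 - t` from `ℤ` and the `f₁` term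
pays for the cut-off `2l`. -/
lemma min_one_sub_cos_le_fHalf_add_f1 {l : ℝ} (hl : 0 ≤ l) (hlπ : l ≤ π ^ 2 / 32) (a b : ℝ) :
    min (1 - cos (2 * π * (a + b))) (2 * l)
      ≤ 2 * fHalf a + 2 * fHalf b + 4 * l / π ^ 2 * (1 + 8 * l / π ^ 2) * f1 (a + b) := by
  set p := round (2 * a)
  set q := round (2 * b)
  set t := |a - p / 2| + |b - q / 2|
  have hfHalf : 2 * π ^ 2 * t ^ 2 ≤ 2 * fHalf a + 2 * fHalf b := by
    simp only [fHalf, distHalfZ_eq]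
    nlinarith [sq_nonneg (|a - p / 2| - |b - q / 2|), sq_nonneg π]
  rcases Int.even_or_odd (p + q) with ⟨n, hn⟩ | ⟨n, hn⟩
  · have hpq : (p : ℝ) + q = n + n := by exact_mod_cast hn
    have hdist : |a + b - n| ≤ t := by
      rw [show a + b - n = (a - p / 2) + (b - q / 2) by linarith]
      exact abs_add_le _ _
    calc min (1 - cos (2 * π * (a + b))) (2 * l) ≤ 1 - cos (2 * π * (a + b)) := min_le_left _ _
      _ ≤ 2 * π ^ 2 * (a + b - n) ^ 2 := one_sub_cos_two_pi_mul_le _ _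
      _ ≤ 2 * π ^ 2 * t ^ 2 := by rw [← sq_abs (a + b - n)]; gcongr
      _ ≤ _ := le_add_of_le_of_nonneg hfHalf (by unfold f1; positivity)
  · have hpq : (p : ℝ) + q = 2 * n + 1 := by exact_mod_cast hn
    have hdist : |a + b - (n + 1 / 2)| ≤ t := by
      rw [show a + b - (n + 1 / 2) = (a - p / 2) + (b - q / 2) by linarith]
      exact abs_add_le _ _
    have ht : t ≤ 1 / 2 := by
      linarith [abs_sub_round_two_mul_div_two_le a, abs_sub_round_two_mul_div_two_le b]
    have hD := (one_half_sub_le_distZ (a + b) n).trans' (by linarith : 1 / 2 - t ≤ _)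
    have hD2 : 1 / 4 - t ≤ distZ (a + b) ^ 2 := by nlinarith
    have hπ : 0 < π ^ 2 := by positivity
    set δ := 8 * l / π ^ 2
    have hlδ : l = δ * π ^ 2 / 8 := by simp only [δ]; field_simp
    have hδ : δ ≤ 1 / 4 := by rw [div_le_iff₀ hπ]; linarith
    have hquad : 0 ≤ 2 * t ^ 2 - δ * (1 + δ) * t + δ ^ 2 / 4 := by
      have h2 : (1 + δ) ^ 2 ≤ 2 := by nlinarith
      nlinarith [sq_nonneg (t - δ * (1 + δ) / 4), mul_le_mul_of_nonneg_left h2 (sq_nonneg δ)]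
    calc min (1 - cos (2 * π * (a + b))) (2 * l) ≤ 2 * l := min_le_right _ _
      _ ≤ 2 * π ^ 2 * t ^ 2 + 8 * l * (1 + δ) * distZ (a + b) ^ 2 := by
        rw [hlδ]
        nlinarith [mul_le_mul_of_nonneg_left hD2 (by positivity : 0 ≤ δ * π ^ 2 * (1 + δ))]
      _ ≤ _ := by
        rw [show 8 * l * (1 + δ) * distZ (a + b) ^ 2 = 4 * l / π ^ 2 * (1 + δ) * f1 (a + b) by
          unfold f1; field_simp; ring]
        linarith

section Energies

variable (α ε : ℝ) (u : ℤ × ℤ → ℝ) (A : Set Plane)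

lemma sum_WMen_le (R : ℝ) (w : ℤ × ℤ → ℂ) :
    ∑ j, WMen α R ε j w A
      ≤ (∑' i : latticeSeg ε (2, 0) A,
          ENNReal.ofReal (min (1 / 2 * ‖w ((i : ℤ × ℤ) + (2, 0)) - w i‖ ^ 2) (2 * R * ε)))
        + ∑' i : latticeSeg ε (0, 2) A,
          ENNReal.ofReal (min (1 / 2 * ‖w ((i : ℤ × ℤ) + (0, 2)) - w i‖ ^ 2) (2 * α * ε)) := by
  simp only [WMen, Finset.sum_add_distrib]
  exact add_le_add
    (sum_tsum_subLat_le ε _ A fun i => ENNReal.ofReal (min (1 / 2 * ‖w (i + (2, 0)) - w i‖ ^ 2) _))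
    (sum_tsum_subLat_le ε _ A fun i => ENNReal.ofReal (min (1 / 2 * ‖w (i + (0, 2)) - w i‖ ^ 2) _))

lemma tsum_horizontal_le (c : ℝ) :
    ∑' i : latticeSeg ε (2, 0) A,
        ENNReal.ofReal (min (1 / 2 * ‖phase u ((i : ℤ × ℤ) + (2, 0)) - phase u i‖ ^ 2) c)
      ≤ 4 * ∑' i : latticeSeg ε (1, 0) A, ENNReal.ofReal (f0 (u ((i : ℤ × ℤ) + (1, 0)) - u i)) := by
  have h := tsum_latticeSeg_add_self_le (ε := ε) (A := A) (e := (1, 0)) (d := (2, 0)) rfl le_rfl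
    (fun i => min (1 / 2 * ‖phase u (i + (2, 0)) - phase u i‖ ^ 2) c)
    (fun i => f0 (u (i + (1, 0)) - u i)) 0 fun i _ => by
      have h := one_sub_cos_le_f0 (u (i + (1, 0)) - u i) (u (i + (2, 0)) - u (i + (1, 0)))
      rw [sub_add_sub_cancel'] at h
      rw [half_norm_phase_sub_phase_sq, zero_mul, add_zero, add_assoc i]
      exact (min_le_left _ _).trans h
  simpa using h

lemma tsum_vertical_le (h₀ : 0 ≤ α * ε) (h₁ : α * ε ≤ π ^ 2 / 32) :
    ∑' i : latticeSeg ε (0, 2) A,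
        ENNReal.ofReal (min (1 / 2 * ‖phase u ((i : ℤ × ℤ) + (0, 2)) - phase u i‖ ^ 2) (2 * α * ε))
      ≤ 4 * ∑' i : latticeSeg ε (0, 1) A, ENNReal.ofReal (fHalf (u ((i : ℤ × ℤ) + (0, 1)) - u i))
        + ENNReal.ofReal (4 * (α * ε) / π ^ 2 * (1 + 8 * (α * ε) / π ^ 2))
          * ∑' i : latticeSeg ε (0, 2) A, ENNReal.ofReal (f1 (u ((i : ℤ × ℤ) + (0, 2)) - u i)) :=
  tsum_latticeSeg_add_self_le (e := (0, 1)) (d := (0, 2)) rfl (by positivity)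
    (fun i => min (1 / 2 * ‖phase u (i + (0, 2)) - phase u i‖ ^ 2) (2 * α * ε))
    (fun i => fHalf (u (i + (0, 1)) - u i)) (fun i => f1 (u (i + (0, 2)) - u i)) fun i _ => by
      have h := min_one_sub_cos_le_fHalf_add_f1 h₀ h₁
        (u (i + (0, 1)) - u i) (u (i + (0, 2)) - u (i + (0, 1)))
      rw [sub_add_sub_cancel', ← mul_assoc] at h
      rwa [half_norm_phase_sub_phase_sq, add_assoc i]

theorem sum_WMen_le_Fpedge (h₀ : 0 ≤ α * ε) (h₁ : α * ε ≤ π ^ 2 / 32) (R : ℝ) :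
    ∑ j, WMen α R ε j (phase u) A
      ≤ 4 * ENNReal.ofReal (1 + 8 * (α * ε) / π ^ 2) * Fpedge α ε u A := by
  set κ := ENNReal.ofReal (1 + 8 * (α * ε) / π ^ 2)
  have hκ : 1 ≤ κ := ENNReal.one_le_ofReal.mpr (le_add_of_nonneg_right (by positivity))
  have hcoef : ENNReal.ofReal (4 * (α * ε) / π ^ 2 * (1 + 8 * (α * ε) / π ^ 2))
      = 4 * κ * ENNReal.ofReal (α / π ^ 2 * ε) := by
    rw [← ENNReal.ofReal_ofNat 4, ← ENNReal.ofReal_mul (by norm_num),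
      ← ENNReal.ofReal_mul (by positivity)]
    congr 1
    ring
  refine ((sum_WMen_le α ε A R _).trans (add_le_add (tsum_horizontal_le ε u A _)
    (tsum_vertical_le α ε u A h₀ h₁))).trans ?_
  rw [hcoef, Fpedge]
  calc _ ≤ 4 * κ * _ + (4 * κ * _ + 4 * κ * ENNReal.ofReal (α / π ^ 2 * ε) * _) := by
        gcongr <;> exact le_mul_of_one_le_right' hκ
    _ = _ := by ring

end Energies

/-- lower bound of the partial-edge energies by the weak-membrane energies on the
four shifted double lattices, with a constant `C₁` depending only on `α` and `C₀`. -/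
theorem stmt10 (α C₀ : ℝ) (hα : 0 < α) (hC₀ : 0 < C₀) :
    ∃ C₁ : ℝ, 0 < C₁ ∧
      ∀ A : Set Plane, MeasurableSet A →
        ∀ u : ℝ → ℤ × ℤ → ℝ,
          (∀ ε ∈ Set.Ioo (0 : ℝ) 1, Fpedge α ε (u ε) A ≤ ENNReal.ofReal (C₀ * |Real.log ε|)) →
          ∀ R : ℝ, 0 < R → ∃ εR : ℝ, 0 < εR ∧
            ∀ ε ∈ Set.Ioo (0 : ℝ) εR, ε ∈ Set.Ioo (0 : ℝ) 1 →
              (1 / 4 : ℝ≥0∞) *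
                  ∑ j : Fin 4,
                    WMen α R ε j (fun i => Complex.exp (2 * Real.pi * Complex.I * (u ε i : ℂ))) A
                ≤ Fpedge α ε (u ε) A + ENNReal.ofReal (C₁ * Real.sqrt ε * |Real.log ε|) := by
  refine ⟨8 * α * C₀ / π ^ 2, by positivity,
    fun A _ u hu R _ => ⟨π ^ 2 / (32 * α), by positivity, ?_⟩⟩
  rintro ε ⟨hε, hεα⟩ hε1
  have hαε : α * ε ≤ π ^ 2 / 32 := by
    rw [lt_div_iff₀ (by positivity)] at hεα
    linarith
  have hεsqrt : ε ≤ √ε := (Real.le_sqrt hε.le hε.le).mpr (by nlinarith [hε1.2])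
  set F := Fpedge α ε (u ε) A
  calc (1 / 4 : ℝ≥0∞) * ∑ j, WMen α R ε j (phase (u ε)) A
      ≤ 1 / 4 * (4 * ENNReal.ofReal (1 + 8 * (α * ε) / π ^ 2) * F) := by
        gcongr
        exact sum_WMen_le_Fpedge α ε (u ε) A (by positivity) hαε R
    _ = F + ENNReal.ofReal (8 * (α * ε) / π ^ 2) * F := by
        rw [ENNReal.ofReal_add zero_le_one (by positivity), ENNReal.ofReal_one, ← mul_assoc,
          ← mul_assoc, ENNReal.div_mul_cancel (by norm_num) (by norm_num), one_mul, add_mul,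
          one_mul]
    _ ≤ F + ENNReal.ofReal (8 * (α * ε) / π ^ 2) * ENNReal.ofReal (C₀ * |log ε|) := by
        gcongr
        exact hu ε hε1
    _ ≤ F + ENNReal.ofReal (8 * α * C₀ / π ^ 2 * √ε * |log ε|) := by
        rw [← ENNReal.ofReal_mul (by positivity)]
        gcongr F + ENNReal.ofReal ?_
        calc 8 * (α * ε) / π ^ 2 * (C₀ * |log ε|) = 8 * α * C₀ / π ^ 2 * ε * |log ε| := by ring
          _ ≤ _ := by gcongr
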